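/- arXiv:1612.04786 — 2 statements merged into one kernel-verified Lean document; each statement's English description precedes it below -/
import Mathlib

section
/- If G⃗ is a proper circular arc digraph (i.e., an orientation of a simple graph containing no induced copy of K⃗_{12} or K⃗_{21}), then X_{G⃗}(x,t) has symmetric coefficients: for each j ≥ 0, the coefficient of t^j in X_{G⃗}(x,t) is a symmetric function. -/
open scoped BigOperators Classical

namespace CQSF

/-- A proper coloring of the (underlying graph of the) digraph with edge set `E`. -/
def Proper {n : ℕ} (E : Finset (Fin n × Fin n)) (κ : Fin n → ℕ) : Prop :=
  ∀ e ∈ E, κ e.1 ≠ κ e.2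

/-- The ascent number of a coloring: directed edges `(u,v)` with `κ u < κ v`. -/
noncomputable def asc {n : ℕ} (E : Finset (Fin n × Fin n)) (κ : Fin n → ℕ) : ℕ :=
  (E.filter fun e => κ e.1 < κ e.2).card

/-- The content (color multiplicities) of a coloring, i.e. the exponent vector of
its monomial `x_{κ(v₁)} ⋯ x_{κ(vₙ)}`. -/
noncomputable def content (n : ℕ) (κ : Fin n → ℕ) : ℕ →₀ ℕ :=
  ∑ v : Fin n, Finsupp.single (κ v) 1

/-- The chromatic quasisymmetric function of a digraph, as a formal power series in
`x_0, x_1, …` with coefficients in `ℚ[t]`: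
`X_G(x,t) = Σ_κ t^{asc κ} x_{κ(v₁)} ⋯ x_{κ(vₙ)}` over proper colorings `κ`. -/
noncomputable def X (n : ℕ) (E : Finset (Fin n × Fin n)) :
    MvPowerSeries ℕ (Polynomial ℚ) :=
  fun d => ∑ᶠ (κ : Fin n → ℕ) (_ : Proper E κ ∧ content n κ = d),
    (Polynomial.X : Polynomial ℚ) ^ asc E κ


/-- Underlying undirected adjacency of a digraph. -/
def UAdj {n : ℕ} (E : Finset (Fin n × Fin n)) (u v : Fin n) : Prop :=
  (u, v) ∈ E ∨ (v, u) ∈ E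

/-- An oriented graph: no loops and no bidirected edges. -/
def Oriented {n : ℕ} (E : Finset (Fin n × Fin n)) : Prop :=
  ∀ e ∈ E, (e.2, e.1) ∉ E

/-- No induced copy of `K⃗₁₂`: no vertex with edges out to two mutually nonadjacent
vertices. -/
def K12Free {n : ℕ} (E : Finset (Fin n × Fin n)) : Prop :=
  ¬ ∃ u v w : Fin n, v ≠ w ∧ (u, v) ∈ E ∧ (u, w) ∈ E ∧ ¬ UAdj E v w

/-- No induced copy of `K⃗₂₁`: no two mutually nonadjacent vertices with edges into a
common vertex. -/
def K21Free {n : ℕ} (E : Finset (Fin n × Fin n)) : Prop :=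
  ¬ ∃ u v w : Fin n, v ≠ w ∧ (v, u) ∈ E ∧ (w, u) ∈ E ∧ ¬ UAdj E v w

/-- A proper circular arc digraph: an oriented graph avoiding induced `K⃗₁₂` and `K⃗₂₁`. -/
def PCADigraph {n : ℕ} (E : Finset (Fin n × Fin n)) : Prop :=
  Oriented E ∧ K12Free E ∧ K21Free E
end CQSF

/-!
Fix two consecutive colours `i` and `i + 1`. In a proper colouring, the vertices of these two
colours split into Kempe chains, the components of the bicoloured subgraph. Since there is no
induced `K⃗₁₂` or `K⃗₂₁`, a bicoloured vertex has at most one bicoloured out-neighbour and at most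
one bicoloured in-neighbour, so every chain is a directed path or cycle with alternating colours.
Swapping `i` and `i + 1` on exactly the chains with unequally many vertices of the two colours
(paths with an odd number of vertices, hence as many ascents as descents) is an involution on
proper colourings which exchanges the multiplicities of `i` and `i + 1` and preserves the
number of ascents. So every coefficient of `X` is invariant under adjacent transpositions of
the colours, and a permutation acts on a monomial only through its finitely many variables,
that is, as a product of such transpositions.
-/

open Finset Relation

theorem Relation.ReflTransGen.of_symmGen {α : Type*} {r : α → α → Prop}
    (hr : ∀ a b c, r a c → r b c → a = b) {s t : α} (hs : ∀ a, ¬ r a s)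
    (h : ReflTransGen (SymmGen r) s t) : ReflTransGen r s t := by
  induction h with
  | refl => exact .refl
  | tail _ hbc ih =>
    rcases hbc with hbc | hcb
    · exact ih.tail hbc
    · rcases ih.cases_tail with rfl | ⟨d, hsd, hdb⟩
      · exact absurd hcb (hs _)
      · rwa [hr _ _ _ hdb hcb] at hsd

theorem Relation.eq_of_reflTransGen_symmGen {α : Type*} {r : α → α → Prop}
    (hr : ∀ a b c, r a c → r b c → a = b) {s t : α} (hs : ∀ a, ¬ r a s)
    (ht : ∀ a, ¬ r a t) (h : ReflTransGen (SymmGen r) s t) : s = t := by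
  rcases (h.of_symmGen hr hs).cases_tail with rfl | ⟨d, -, hdt⟩
  · rfl
  · exact absurd hdt (ht d)

theorem Finset.card_filter_eq_of_card_fiber_eq {α β : Type*} [DecidableEq β] {s : Finset α}
    (f : α → β) {p q : α → Prop} [DecidablePred p] [DecidablePred q]
    (h : ∀ a ∈ s, p a ∨ q a → #{x ∈ s | f x = f a ∧ p x} = #{x ∈ s | f x = f a ∧ q x}) :
    #{x ∈ s | p x} = #{x ∈ s | q x} := by
  have hmaps (r : α → Prop) [DecidablePred r] :
      ((s.filter r : Finset α) : Set α).MapsTo f (s.image f) :=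
    fun x hx => mem_image_of_mem f (mem_filter.1 hx).1
  rw [card_eq_sum_card_fiberwise (hmaps p), card_eq_sum_card_fiberwise (hmaps q)]
  refine sum_congr rfl fun b _ => ?_
  simp only [filter_filter]
  by_cases hb : ∃ a ∈ s, f a = b ∧ (p a ∨ q a)
  · obtain ⟨a, ha, rfl, hpq⟩ := hb
    simpa only [and_comm] using h a ha hpq
  · push Not at hb
    rw [card_eq_zero.2, card_eq_zero.2] <;>
      exact filter_eq_empty_iff.2 fun x hx hx' => by have := hb x hx; tauto

theorem Finset.card_filter_and_add_card_filter_and_le_one {α : Type*} [DecidableEq α]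
    {s : Finset α} {p q r : α → Prop} [DecidablePred p] [DecidablePred q] [DecidablePred r]
    (hpq : ∀ a ∈ s, p a → ¬ q a) (hr : ∀ a ∈ s, ∀ b ∈ s, r a → r b → a = b) :
    #{a ∈ s | p a ∧ r a} + #{a ∈ s | q a ∧ r a} ≤ 1 := by
  rw [← card_union_of_disjoint (disjoint_filter.2 fun a ha h h' => hpq a ha h.1 h'.1)]
  refine card_le_one.2 fun a ha b hb => ?_
  simp only [mem_union, mem_filter] at ha hb
  exact hr a (by tauto) b (by tauto) (by tauto) (by tauto)

namespace Finsupp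

variable {α M β : Type*} [AddCommMonoid M]

theorem equivMapDomain_congr {π σ : Equiv.Perm α} {d : α →₀ M}
    (h : ∀ x ∈ d.support, π x = σ x) : equivMapDomain π d = equivMapDomain σ d := by
  rw [equivMapDomain_eq_mapDomain, equivMapDomain_eq_mapDomain]
  exact mapDomain_congr h

theorem apply_equivMapDomain_eq_of_forall_swap [DecidableEq α] (F : (α →₀ M) → β)
    (hF : ∀ a b d, F (equivMapDomain (Equiv.swap a b) d) = F d) (π : Equiv.Perm α)
    (d : α →₀ M) : F (equivMapDomain π d) = F d := by
  suffices ∀ s : Finset α, ∀ π : Equiv.Perm α, (∀ x ∈ d.support, x ∉ s → π x = x) →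
      F (equivMapDomain π d) = F d from this d.support π fun x hx hx' => absurd hx hx'
  intro s
  induction s using Finset.induction_on with
  | empty =>
    intro π hπ
    rw [equivMapDomain_congr (σ := Equiv.refl α) fun x hx => hπ x hx (notMem_empty x),
      equivMapDomain_refl]
  | insert a s _ ih =>
    intro π hπ
    set τ := Equiv.swap (π a) a
    have hfix : ∀ x ∈ d.support, x ∉ s → (π.trans τ) x = x := by
      intro x hx hxs
      by_cases hxa : x = a
      · subst hxa; exact Equiv.swap_apply_left _ _
      · have hπx : π x = x := hπ x hx (by simp [hxa, hxs])
        rw [Equiv.trans_apply, hπx]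
        exact Equiv.swap_apply_of_ne_of_ne (fun h => hxa (π.injective (hπx.trans h))) hxa
    calc F (equivMapDomain π d)
        = F (equivMapDomain τ (equivMapDomain (π.trans τ) d)) := by
          rw [← equivMapDomain_trans, Equiv.trans_assoc, Equiv.swap_swap, Equiv.trans_refl]
      _ = F d := by rw [hF, ih _ hfix]

theorem apply_equivMapDomain_swap_eq_of_forall_swap_succ (F : (ℕ →₀ M) → β)
    (hF : ∀ i d, F (equivMapDomain (Equiv.swap i (i + 1)) d) = F d) (a b : ℕ)
    (d : ℕ →₀ M) : F (equivMapDomain (Equiv.swap a b) d) = F d := by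
  wlog hab : a ≤ b generalizing a b
  · rw [Equiv.swap_comm]; exact this b a (by omega)
  obtain ⟨k, rfl⟩ := Nat.exists_eq_add_of_le hab
  clear hab
  induction k generalizing d with
  | zero => rw [add_zero, Equiv.swap_self, equivMapDomain_refl]
  | succ k ih =>
    have ih' : ∀ d, F (equivMapDomain (Equiv.swap (a + k) a) d) = F d := by
      intro d; rw [Equiv.swap_comm]; exact ih d
    rw [← add_assoc, ← Equiv.swap_mul_swap_mul_swap (x := a + k + 1) (y := a + k) (z := a)
      (by omega) (by omega), Equiv.Perm.mul_def, Equiv.Perm.mul_def, equivMapDomain_trans,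
      equivMapDomain_trans, ih', Equiv.swap_comm (a + k + 1), hF, ih']

end Finsupp

namespace CQSF

theorem Proper.ne_of_uAdj {n : ℕ} {E : Finset (Fin n × Fin n)} {κ : Fin n → ℕ}
    (hκ : Proper E κ) {u v : Fin n} (h : UAdj E u v) : κ u ≠ κ v := by
  rcases h with h | h
  · exact hκ _ h
  · exact (hκ _ h).symm

section Kempe

variable {n : ℕ} (E : Finset (Fin n × Fin n)) (i : ℕ) (κ : Fin n → ℕ)

def Bicolored (v : Fin n) : Prop := κ v = i ∨ κ v = i + 1

def BiStep (u v : Fin n) : Prop := (u, v) ∈ E ∧ Bicolored i κ u ∧ Bicolored i κ v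

noncomputable def kempeChain (v : Fin n) : Finset (Fin n) :=
  {u | ReflTransGen (SymmGen (BiStep E i κ)) v u}

def IsSwapped (v : Fin n) : Prop :=
  Bicolored i κ v ∧
    #{u ∈ kempeChain E i κ v | κ u = i} ≠ #{u ∈ kempeChain E i κ v | κ u = i + 1}

noncomputable def kempeSwap (v : Fin n) : ℕ :=
  if IsSwapped E i κ v then Equiv.swap i (i + 1) (κ v) else κ v

variable {E i κ} {u v w : Fin n}

theorem mem_kempeChain :
    u ∈ kempeChain E i κ v ↔ ReflTransGen (SymmGen (BiStep E i κ)) v u := by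
  simp [kempeChain]

theorem mem_kempeChain_self (v : Fin n) : v ∈ kempeChain E i κ v := mem_kempeChain.2 .refl

theorem mem_kempeChain_comm : u ∈ kempeChain E i κ v ↔ v ∈ kempeChain E i κ u := by
  simp only [mem_kempeChain]
  exact ⟨symm, symm⟩

theorem kempeChain_eq_of_mem (h : u ∈ kempeChain E i κ v) :
    kempeChain E i κ u = kempeChain E i κ v := by
  ext w
  simp only [mem_kempeChain] at h ⊢
  exact ⟨fun h' => h.trans h', fun h' => (symm h).trans h'⟩

theorem mem_kempeChain_iff_eq :
    u ∈ kempeChain E i κ v ↔ kempeChain E i κ u = kempeChain E i κ v :=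
  ⟨kempeChain_eq_of_mem, fun h => h ▸ mem_kempeChain_self u⟩

theorem mem_kempeChain_of_uAdj (h : UAdj E u v) (hu : Bicolored i κ u) (hv : Bicolored i κ v) :
    v ∈ kempeChain E i κ u := by
  refine mem_kempeChain.2 (.single ?_)
  rcases h with h | h
  · exact .inl ⟨h, hu, hv⟩
  · exact .inr ⟨h, hv, hu⟩

theorem Bicolored.of_mem_kempeChain (hv : Bicolored i κ v) (h : u ∈ kempeChain E i κ v) :
    Bicolored i κ u := by
  rcases (mem_kempeChain.1 h).cases_tail with rfl | ⟨c, -, hcu | huc⟩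
  · exact hv
  · exact hcu.2.2
  · exact huc.2.1

theorem isSwapped_iff_of_mem (h : u ∈ kempeChain E i κ v) :
    IsSwapped E i κ u ↔ IsSwapped E i κ v := by
  unfold IsSwapped
  rw [kempeChain_eq_of_mem h]
  exact ⟨fun hu => ⟨hu.1.of_mem_kempeChain (mem_kempeChain_comm.1 h), hu.2⟩,
    fun hv => ⟨hv.1.of_mem_kempeChain h, hv.2⟩⟩

theorem not_bicolored_of_uAdj (h : UAdj E u v) (hu : IsSwapped E i κ u)
    (hv : ¬ IsSwapped E i κ v) : ¬ Bicolored i κ v := fun hb =>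
  hv ((isSwapped_iff_of_mem (mem_kempeChain_of_uAdj h hu.1 hb)).2 hu)

theorem biStep_right_unique (h12 : K12Free E) (hκ : Proper E κ) (huv : BiStep E i κ u v)
    (huw : BiStep E i κ u w) : v = w := by
  by_contra hne
  refine h12 ⟨u, v, w, hne, huv.1, huw.1, fun hvw => hκ.ne_of_uAdj hvw ?_⟩
  have : κ u ≠ κ v := hκ _ huv.1
  have : κ u ≠ κ w := hκ _ huw.1
  obtain ⟨-, hu, hv⟩ := huv
  obtain ⟨-, -, hw⟩ := huw
  unfold Bicolored at hu hv hw
  omega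

theorem biStep_left_unique (h21 : K21Free E) (hκ : Proper E κ) (huw : BiStep E i κ u w)
    (hvw : BiStep E i κ v w) : u = v := by
  by_contra hne
  refine h21 ⟨w, u, v, hne, huw.1, hvw.1, fun huv => hκ.ne_of_uAdj huv ?_⟩
  have : κ u ≠ κ w := hκ _ huw.1
  have : κ v ≠ κ w := hκ _ hvw.1
  obtain ⟨-, hu, hw⟩ := huw
  obtain ⟨-, hv, -⟩ := hvw
  unfold Bicolored at hu hv hw
  omega

theorem eq_of_mem_kempeChain_of_forall_not_biStep_left (h21 : K21Free E) (hκ : Proper E κ)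
    (hu : ∀ a, ¬ BiStep E i κ a u) (hw : ∀ a, ¬ BiStep E i κ a w)
    (h : w ∈ kempeChain E i κ u) : u = w :=
  eq_of_reflTransGen_symmGen (r := BiStep E i κ)
    (fun _ _ _ hac hbc => biStep_left_unique h21 hκ hac hbc) hu hw (mem_kempeChain.1 h)

theorem eq_of_mem_kempeChain_of_forall_not_biStep_right (h12 : K12Free E) (hκ : Proper E κ)
    (hu : ∀ a, ¬ BiStep E i κ u a) (hw : ∀ a, ¬ BiStep E i κ w a)
    (h : w ∈ kempeChain E i κ u) : u = w :=
  eq_of_reflTransGen_symmGen (r := Function.swap (BiStep E i κ))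
    (fun _ _ _ hac hbc => biStep_right_unique h12 hκ hac hbc) hu hw
    (by rw [symmGen_swap]; exact mem_kempeChain.1 h)

theorem card_kempeChain_edges_tail (h12 : K12Free E) (hκ : Proper E κ)
    (hv : Bicolored i κ v) (c : ℕ) :
    #{e ∈ E | e.1 ∈ kempeChain E i κ v ∧ e.2 ∈ kempeChain E i κ v ∧ κ e.1 = c} =
      #{u ∈ kempeChain E i κ v | κ u = c ∧ ∃ w, BiStep E i κ u w} := by
  refine card_nbij Prod.fst (fun e he => ?_) (fun e he e' he' h => ?_) (fun u hu => ?_)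
  · simp only [coe_filter, Set.mem_ofPred_eq] at he ⊢
    exact ⟨he.2.1, he.2.2.2, e.2, he.1, hv.of_mem_kempeChain he.2.1,
      hv.of_mem_kempeChain he.2.2.1⟩
  · simp only [coe_filter, Set.mem_ofPred_eq] at he he'
    refine Prod.ext h (biStep_right_unique h12 hκ ⟨he.1, hv.of_mem_kempeChain he.2.1,
      hv.of_mem_kempeChain he.2.2.1⟩ ?_)
    rw [h]
    exact ⟨he'.1, hv.of_mem_kempeChain he'.2.1, hv.of_mem_kempeChain he'.2.2.1⟩
  · simp only [coe_filter, Set.mem_ofPred_eq] at hu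
    obtain ⟨huC, hc, w, huw⟩ := hu
    refine ⟨(u, w), ?_, rfl⟩
    simp only [coe_filter, Set.mem_ofPred_eq]
    exact ⟨huw.1, huC, mem_kempeChain.2 ((mem_kempeChain.1 huC).tail (.inl huw)), hc⟩

theorem card_kempeChain_edges_head (h21 : K21Free E) (hκ : Proper E κ)
    (hv : Bicolored i κ v) (c : ℕ) :
    #{e ∈ E | e.1 ∈ kempeChain E i κ v ∧ e.2 ∈ kempeChain E i κ v ∧ κ e.2 = c} =
      #{u ∈ kempeChain E i κ v | κ u = c ∧ ∃ w, BiStep E i κ w u} := by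
  refine card_nbij Prod.snd (fun e he => ?_) (fun e he e' he' h => ?_) (fun u hu => ?_)
  · simp only [coe_filter, Set.mem_ofPred_eq] at he ⊢
    exact ⟨he.2.2.1, he.2.2.2, e.1, he.1, hv.of_mem_kempeChain he.2.1,
      hv.of_mem_kempeChain he.2.2.1⟩
  · simp only [coe_filter, Set.mem_ofPred_eq] at he he'
    refine Prod.ext (biStep_left_unique h21 hκ ⟨he.1, hv.of_mem_kempeChain he.2.1,
      hv.of_mem_kempeChain he.2.2.1⟩ ?_) h
    rw [h]
    exact ⟨he'.1, hv.of_mem_kempeChain he'.2.1, hv.of_mem_kempeChain he'.2.2.1⟩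
  · simp only [coe_filter, Set.mem_ofPred_eq] at hu
    obtain ⟨huC, hc, w, hwu⟩ := hu
    refine ⟨(w, u), ?_, rfl⟩
    simp only [coe_filter, Set.mem_ofPred_eq]
    exact ⟨hwu.1, mem_kempeChain.2 ((mem_kempeChain.1 huC).tail (.inr hwu)), huC, hc⟩

theorem card_kempeChain_color_eq_tail (h12 : K12Free E) (hκ : Proper E κ)
    (hv : Bicolored i κ v) (c : ℕ) :
    #{u ∈ kempeChain E i κ v | κ u = c} =
      #{e ∈ E | e.1 ∈ kempeChain E i κ v ∧ e.2 ∈ kempeChain E i κ v ∧ κ e.1 = c} +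
        #{u ∈ kempeChain E i κ v | κ u = c ∧ ¬ ∃ w, BiStep E i κ u w} := by
  rw [card_kempeChain_edges_tail h12 hκ hv, ← filter_filter, ← filter_filter,
    card_filter_add_card_filter_not]

theorem card_kempeChain_color_eq_head (h21 : K21Free E) (hκ : Proper E κ)
    (hv : Bicolored i κ v) (c : ℕ) :
    #{u ∈ kempeChain E i κ v | κ u = c} =
      #{e ∈ E | e.1 ∈ kempeChain E i κ v ∧ e.2 ∈ kempeChain E i κ v ∧ κ e.2 = c} +
        #{u ∈ kempeChain E i κ v | κ u = c ∧ ¬ ∃ w, BiStep E i κ w u} := by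
  rw [card_kempeChain_edges_head h21 hκ hv, ← filter_filter, ← filter_filter,
    card_filter_add_card_filter_not]

theorem card_kempeChain_edges_congr (hκ : Proper E κ) (hv : Bicolored i κ v)
    {P Q : ℕ → ℕ → Prop} [DecidableRel P] [DecidableRel Q]
    (hPQ : ∀ a b, a ≠ b → (a = i ∨ a = i + 1) → (b = i ∨ b = i + 1) → (P a b ↔ Q a b)) :
    #{e ∈ E | e.1 ∈ kempeChain E i κ v ∧ e.2 ∈ kempeChain E i κ v ∧ P (κ e.1) (κ e.2)} =
      #{e ∈ E | e.1 ∈ kempeChain E i κ v ∧ e.2 ∈ kempeChain E i κ v ∧ Q (κ e.1) (κ e.2)} :=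
  congrArg card <| filter_congr fun e he => and_congr_right fun h1 => and_congr_right fun h2 =>
    hPQ _ _ (hκ e he) (hv.of_mem_kempeChain h1) (hv.of_mem_kempeChain h2)

theorem card_kempeChain_ascents_eq_descents (h12 : K12Free E) (h21 : K21Free E)
    (hκ : Proper E κ) (hv : IsSwapped E i κ v) :
    #{e ∈ E | e.1 ∈ kempeChain E i κ v ∧ e.2 ∈ kempeChain E i κ v ∧ κ e.1 < κ e.2} =
      #{e ∈ E | e.1 ∈ kempeChain E i κ v ∧ e.2 ∈ kempeChain E i κ v ∧ κ e.2 < κ e.1} := by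
  -- Every vertex of the chain except its (at most one) sink starts exactly one chain edge, and
  -- every vertex except its (at most one) source ends exactly one. As the two colour classes
  -- differ in size, this leaves equally many edges leaving each class.
  have tail_i := card_kempeChain_color_eq_tail h12 hκ hv.1 i
  have tail_i1 := card_kempeChain_color_eq_tail h12 hκ hv.1 (i + 1)
  have head_i := card_kempeChain_color_eq_head h21 hκ hv.1 i
  have head_i1 := card_kempeChain_color_eq_head h21 hκ hv.1 (i + 1)
  have asc_tail := card_kempeChain_edges_congr hκ hv.1 (P := (· < ·)) (Q := fun a _ => a = i)
    (by omega)
  have asc_head := card_kempeChain_edges_congr hκ hv.1 (P := (· < ·))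
    (Q := fun _ b => b = i + 1) (by omega)
  have desc_tail := card_kempeChain_edges_congr hκ hv.1 (P := fun a b => b < a)
    (Q := fun a _ => a = i + 1) (by omega)
  have desc_head := card_kempeChain_edges_congr hκ hv.1 (P := fun a b => b < a)
    (Q := fun _ b => b = i) (by omega)
  have unbalanced := hv.2
  set C := kempeChain E i κ v
  have colors_ne : ∀ u ∈ C, κ u = i → ¬ κ u = i + 1 := by omega
  have sinks : #{u ∈ C | κ u = i ∧ ¬ ∃ w, BiStep E i κ u w} +
      #{u ∈ C | κ u = i + 1 ∧ ¬ ∃ w, BiStep E i κ u w} ≤ 1 :=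
    card_filter_and_add_card_filter_and_le_one colors_ne fun a ha b hb hna hnb =>
      eq_of_mem_kempeChain_of_forall_not_biStep_right h12 hκ (not_exists.1 hna)
        (not_exists.1 hnb) (by rw [kempeChain_eq_of_mem ha]; exact hb)
  have sources : #{u ∈ C | κ u = i ∧ ¬ ∃ w, BiStep E i κ w u} +
      #{u ∈ C | κ u = i + 1 ∧ ¬ ∃ w, BiStep E i κ w u} ≤ 1 :=
    card_filter_and_add_card_filter_and_le_one colors_ne fun a ha b hb hna hnb =>
      eq_of_mem_kempeChain_of_forall_not_biStep_left h21 hκ (not_exists.1 hna)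
        (not_exists.1 hnb) (by rw [kempeChain_eq_of_mem ha]; exact hb)
  omega

theorem kempeSwap_of_isSwapped (h : IsSwapped E i κ v) :
    kempeSwap E i κ v = Equiv.swap i (i + 1) (κ v) := if_pos h

theorem kempeSwap_of_not_isSwapped (h : ¬ IsSwapped E i κ v) : kempeSwap E i κ v = κ v :=
  if_neg h

theorem bicolored_kempeSwap : Bicolored i (kempeSwap E i κ) v ↔ Bicolored i κ v := by
  unfold Bicolored kempeSwap
  split_ifs
  · rw [Equiv.swap_apply_def]; split_ifs <;> omega
  · rfl

theorem kempeChain_kempeSwap : kempeChain E i (kempeSwap E i κ) = kempeChain E i κ := by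
  have : BiStep E i (kempeSwap E i κ) = BiStep E i κ := by
    ext u v; simp only [BiStep, bicolored_kempeSwap]
  unfold kempeChain; rw [this]

theorem kempeSwap_eq_iff {c : ℕ} :
    kempeSwap E i κ u = c ↔ κ u = if IsSwapped E i κ u then Equiv.swap i (i + 1) c else c := by
  unfold kempeSwap
  split_ifs
  · exact Equiv.swap_apply_eq_iff
  · rfl

theorem isSwapped_kempeSwap : IsSwapped E i (kempeSwap E i κ) v ↔ IsSwapped E i κ v := by
  unfold IsSwapped
  rw [bicolored_kempeSwap, kempeChain_kempeSwap]
  refine and_congr_right fun _ => ?_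
  have hcount (c : ℕ) : #{u ∈ kempeChain E i κ v | kempeSwap E i κ u = c} =
      #{u ∈ kempeChain E i κ v | κ u = if IsSwapped E i κ v then Equiv.swap i (i + 1) c else c} :=
    congrArg card <| filter_congr fun u hu => by rw [kempeSwap_eq_iff, isSwapped_iff_of_mem hu]
  rw [hcount, hcount]
  split_ifs
  · rw [Equiv.swap_apply_left, Equiv.swap_apply_right]; exact ne_comm
  · rfl

theorem kempeSwap_kempeSwap : kempeSwap E i (kempeSwap E i κ) = κ := by
  funext v
  by_cases h : IsSwapped E i κ v
  · rw [kempeSwap_of_isSwapped (isSwapped_kempeSwap.2 h), kempeSwap_of_isSwapped h,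
      Equiv.swap_apply_self]
  · rw [kempeSwap_of_not_isSwapped (mt isSwapped_kempeSwap.1 h), kempeSwap_of_not_isSwapped h]

theorem kempeSwap_lt_kempeSwap_iff (h : UAdj E u v)
    (hs : ¬ (IsSwapped E i κ u ∧ IsSwapped E i κ v)) :
    kempeSwap E i κ u < kempeSwap E i κ v ↔ κ u < κ v := by
  by_cases hu : IsSwapped E i κ u <;> by_cases hv : IsSwapped E i κ v
  · exact absurd ⟨hu, hv⟩ hs
  · have hvb := not_bicolored_of_uAdj h hu hv
    have hub := hu.1
    rw [kempeSwap_of_isSwapped hu, kempeSwap_of_not_isSwapped hv, Equiv.swap_apply_def]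
    unfold Bicolored at hub hvb
    split_ifs <;> omega
  · have hub := not_bicolored_of_uAdj (Or.symm h) hv hu
    have hvb := hv.1
    rw [kempeSwap_of_not_isSwapped hu, kempeSwap_of_isSwapped hv, Equiv.swap_apply_def]
    unfold Bicolored at hub hvb
    split_ifs <;> omega
  · rw [kempeSwap_of_not_isSwapped hu, kempeSwap_of_not_isSwapped hv]

theorem Proper.kempeSwap (hκ : Proper E κ) : Proper E (kempeSwap E i κ) := by
  intro e he
  have hne : κ e.1 ≠ κ e.2 := hκ e he
  by_cases hs : IsSwapped E i κ e.1 ∧ IsSwapped E i κ e.2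
  · rw [kempeSwap_of_isSwapped hs.1, kempeSwap_of_isSwapped hs.2]
    exact (Equiv.swap i (i + 1)).injective.ne hne
  · have := kempeSwap_lt_kempeSwap_iff (Or.inl he) hs
    have := kempeSwap_lt_kempeSwap_iff (u := e.2) (v := e.1) (Or.inr he) (by tauto)
    omega

theorem content_apply (κ : Fin n → ℕ) (c : ℕ) : content n κ c = #{v | κ v = c} := by
  simp only [content, Finsupp.finsetSum_apply, Finsupp.single_apply, sum_boole, Nat.cast_id]

theorem card_not_isSwapped_eq :
    #{v | κ v = i ∧ ¬ IsSwapped E i κ v} = #{v | κ v = i + 1 ∧ ¬ IsSwapped E i κ v} := by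
  refine card_filter_eq_of_card_fiber_eq (kempeChain E i κ) fun a _ ha => ?_
  have hab : Bicolored i κ a := ha.imp And.left And.left
  have hna : ¬ IsSwapped E i κ a := ha.elim And.right And.right
  have fiber (c : ℕ) : ({x | kempeChain E i κ x = kempeChain E i κ a ∧ κ x = c ∧
      ¬ IsSwapped E i κ x} : Finset (Fin n)) = {x ∈ kempeChain E i κ a | κ x = c} := by
    ext x
    simp only [mem_filter, mem_univ, true_and, ← mem_kempeChain_iff_eq]
    exact ⟨fun h => ⟨h.1, h.2.1⟩, fun h => ⟨h.1, h.2, (isSwapped_iff_of_mem h.1).not.2 hna⟩⟩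
  rw [fiber, fiber]
  exact not_not.1 fun h => hna ⟨hab, h⟩

theorem card_not_isSwapped_swap (c : ℕ) :
    #{v | κ v = c ∧ ¬ IsSwapped E i κ v} =
      #{v | κ v = Equiv.swap i (i + 1) c ∧ ¬ IsSwapped E i κ v} := by
  rw [Equiv.swap_apply_def]
  split_ifs with h1 h2
  · rw [h1]; exact card_not_isSwapped_eq
  · rw [h2]; exact card_not_isSwapped_eq.symm
  · rfl

theorem content_kempeSwap :
    content n (kempeSwap E i κ) = Finsupp.equivMapDomain (Equiv.swap i (i + 1)) (content n κ) := by
  ext c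
  rw [Finsupp.equivMapDomain_apply, Equiv.symm_swap, content_apply, content_apply,
    ← card_filter_add_card_filter_not (p := IsSwapped E i κ),
    ← card_filter_add_card_filter_not (s := {v | κ v = _}) (p := IsSwapped E i κ),
    filter_filter, filter_filter, filter_filter, filter_filter, ← card_not_isSwapped_swap]
  congr 2
  · exact filter_congr fun v _ => and_congr_left fun h => by rw [kempeSwap_eq_iff, if_pos h]
  · exact filter_congr fun v _ => and_congr_left fun h => by rw [kempeSwap_eq_iff, if_neg h]

theorem kempeChain_eq_and_isSwapped_iff {e : Fin n × Fin n} (hw : IsSwapped E i κ w)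
    (he : e ∈ E) :
    (kempeChain E i κ e.1 = kempeChain E i κ w ∧ IsSwapped E i κ e.1 ∧ IsSwapped E i κ e.2) ↔
      (e.1 ∈ kempeChain E i κ w ∧ e.2 ∈ kempeChain E i κ w) := by
  constructor
  · rintro ⟨hC, h1, h2⟩
    rw [← hC]
    exact ⟨mem_kempeChain_self _, mem_kempeChain_of_uAdj (Or.inl he) h1.1 h2.1⟩
  · rintro ⟨h1, h2⟩
    exact ⟨kempeChain_eq_of_mem h1, (isSwapped_iff_of_mem h1).2 hw,
      (isSwapped_iff_of_mem h2).2 hw⟩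

theorem card_swapped_descents_eq_ascents (h12 : K12Free E) (h21 : K21Free E)
    (hκ : Proper E κ) :
    #{e ∈ E | κ e.2 < κ e.1 ∧ (IsSwapped E i κ e.1 ∧ IsSwapped E i κ e.2)} =
      #{e ∈ E | κ e.1 < κ e.2 ∧ (IsSwapped E i κ e.1 ∧ IsSwapped E i κ e.2)} := by
  refine card_filter_eq_of_card_fiber_eq (fun e => kempeChain E i κ e.1) fun a ha hpq => ?_
  have hw : IsSwapped E i κ a.1 := (hpq.elim And.right And.right).1
  calc _ = #{e ∈ E | e.1 ∈ kempeChain E i κ a.1 ∧ e.2 ∈ kempeChain E i κ a.1 ∧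
          κ e.2 < κ e.1} :=
        congrArg card <| filter_congr fun e he => by
          have := kempeChain_eq_and_isSwapped_iff hw he; tauto
    _ = #{e ∈ E | e.1 ∈ kempeChain E i κ a.1 ∧ e.2 ∈ kempeChain E i κ a.1 ∧
          κ e.1 < κ e.2} := (card_kempeChain_ascents_eq_descents h12 h21 hκ hw).symm
    _ = _ :=
        congrArg card <| filter_congr fun e he => by
          have := kempeChain_eq_and_isSwapped_iff hw he; tauto

theorem asc_kempeSwap (h12 : K12Free E) (h21 : K21Free E) (hκ : Proper E κ) :
    asc E (kempeSwap E i κ) = asc E κ := by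
  unfold asc
  rw [← card_filter_add_card_filter_not (s := {e ∈ E | kempeSwap E i κ e.1 < kempeSwap E i κ e.2})
      (p := fun e => IsSwapped E i κ e.1 ∧ IsSwapped E i κ e.2),
    ← card_filter_add_card_filter_not (s := {e ∈ E | κ e.1 < κ e.2})
      (p := fun e => IsSwapped E i κ e.1 ∧ IsSwapped E i κ e.2),
    filter_filter, filter_filter, filter_filter, filter_filter]
  have inside : {e ∈ E | kempeSwap E i κ e.1 < kempeSwap E i κ e.2 ∧
      (IsSwapped E i κ e.1 ∧ IsSwapped E i κ e.2)} =
      {e ∈ E | κ e.2 < κ e.1 ∧ (IsSwapped E i κ e.1 ∧ IsSwapped E i κ e.2)} :=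
    filter_congr fun e he => and_congr_left fun hs => by
      have hne : κ e.1 ≠ κ e.2 := hκ e he
      have h1 := hs.1.1
      have h2 := hs.2.1
      rw [kempeSwap_of_isSwapped hs.1, kempeSwap_of_isSwapped hs.2, Equiv.swap_apply_def,
        Equiv.swap_apply_def]
      unfold Bicolored at h1 h2
      split_ifs <;> omega
  have outside : {e ∈ E | kempeSwap E i κ e.1 < kempeSwap E i κ e.2 ∧
      ¬ (IsSwapped E i κ e.1 ∧ IsSwapped E i κ e.2)} =
      {e ∈ E | κ e.1 < κ e.2 ∧ ¬ (IsSwapped E i κ e.1 ∧ IsSwapped E i κ e.2)} :=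
    filter_congr fun e he => and_congr_left fun hs => kempeSwap_lt_kempeSwap_iff (Or.inl he) hs
  rw [inside, outside, card_swapped_descents_eq_ascents h12 h21 hκ]

end Kempe

theorem X_equivMapDomain_swap_succ {n : ℕ} {E : Finset (Fin n × Fin n)} (h12 : K12Free E) (h21 : K21Free E)
    (i : ℕ) (d : ℕ →₀ ℕ) :
    X n E (Finsupp.equivMapDomain (Equiv.swap i (i + 1)) d) = X n E d := by
  have hmaps (d : ℕ →₀ ℕ) : Set.MapsTo (kempeSwap E i) {κ | Proper E κ ∧ content n κ = d}
      {κ | Proper E κ ∧ content n κ = Finsupp.equivMapDomain (Equiv.swap i (i + 1)) d} :=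
    fun κ hκ => ⟨hκ.1.kempeSwap, by rw [content_kempeSwap, hκ.2]⟩
  have hswap : Finsupp.equivMapDomain (Equiv.swap i (i + 1))
      (Finsupp.equivMapDomain (Equiv.swap i (i + 1)) d) = d := by
    rw [← Finsupp.equivMapDomain_trans, Equiv.swap_swap, Finsupp.equivMapDomain_refl]
  have hinv : Set.InvOn (kempeSwap E i) (kempeSwap E i)
      {κ | Proper E κ ∧ content n κ = Finsupp.equivMapDomain (Equiv.swap i (i + 1)) d}
      {κ | Proper E κ ∧ content n κ = d} :=
    ⟨fun _ _ => kempeSwap_kempeSwap, fun _ _ => kempeSwap_kempeSwap⟩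
  have hback := hmaps (Finsupp.equivMapDomain (Equiv.swap i (i + 1)) d)
  rw [hswap] at hback
  refine finsum_mem_eq_of_bijOn (kempeSwap E i) (hinv.bijOn hback (hmaps d)) fun κ hκ => ?_
  rw [asc_kempeSwap h12 h21 hκ.1]

/-- the chromatic quasisymmetric function of a proper circular arc digraph
has symmetric coefficients: for each `j`, the coefficient of `t^j` is a symmetric
function. -/
theorem pca_symmetric (n : ℕ) (E : Finset (Fin n × Fin n)) (hE : PCADigraph E) :
    ∀ (π : Equiv.Perm ℕ) (j : ℕ) (d : ℕ →₀ ℕ),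
      (MvPowerSeries.coeff (Finsupp.equivMapDomain π d) (X n E)).coeff j =
        (MvPowerSeries.coeff d (X n E)).coeff j := by
  intro π j d
  have hswap : ∀ a b d, X n E (Finsupp.equivMapDomain (Equiv.swap a b) d) = X n E d :=
    Finsupp.apply_equivMapDomain_swap_eq_of_forall_swap_succ (X n E) (X_equivMapDomain_swap_succ hE.2.1 hE.2.2)
  rw [MvPowerSeries.coeff_apply, MvPowerSeries.coeff_apply,
    Finsupp.apply_equivMapDomain_eq_of_forall_swap (X n E) hswap]

end CQSF
end

section
/- The permutations in N_{G,(n)} are in bijection with acyclic orientations of G having a unique sink. -/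
open scoped BigOperators Classical

namespace CQSF

/-- The underlying undirected graph of a digraph. -/
def UG {n : ℕ} (E : Finset (Fin n × Fin n)) : SimpleGraph (Fin n) :=
  SimpleGraph.fromRel fun u v => (u, v) ∈ E

/-- `inv_G⃗(σ)`: the number of directed edges `(i,j)` of the digraph such that `j` comes
before `i` in the one-line notation of `σ` (position `p` carries the letter `σ p`). -/
noncomputable def dinv {n : ℕ} (E : Finset (Fin n × Fin n)) (σ : Equiv.Perm (Fin n)) : ℕ :=
  (E.filter fun e => σ.symm e.2 < σ.symm e.1).card

/-- `rank_{(G,σ)}(x)`: the length of the longest subword of the one-line notation of `σ`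
ending at the letter `x` whose consecutive letters are adjacent in `G`. -/
noncomputable def rank {n : ℕ} (G : SimpleGraph (Fin n)) (σ : Equiv.Perm (Fin n))
    (x : Fin n) : ℕ :=
  sSup {k | ∃ l : List (Fin n), l.length = k ∧ l.Pairwise (· < ·) ∧
    (l.map σ).Chain' G.Adj ∧ l.getLast? = some (σ.symm x)}

/-- `σ` has a `G`-descent at (0-indexed) position `i`: either the rank of the letter at
position `i` exceeds that of the letter at position `i+1`, or the ranks agree and the
letter at position `i` is larger. -/
def GDesc {n : ℕ} (G : SimpleGraph (Fin n)) (σ : Equiv.Perm (Fin n)) (i : ℕ) : Prop :=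
  ∃ h : i + 1 < n,
    rank G σ (σ ⟨i, Nat.lt_of_succ_lt h⟩) > rank G σ (σ ⟨i + 1, h⟩) ∨
      (rank G σ (σ ⟨i, Nat.lt_of_succ_lt h⟩) = rank G σ (σ ⟨i + 1, h⟩) ∧
        σ ⟨i + 1, h⟩ < σ ⟨i, Nat.lt_of_succ_lt h⟩)

/-- The start position of the `i`-th segment when splitting a word into consecutive
segments of sizes `l₀, l₁, …`. -/
def segStart (l : List ℕ) (i : ℕ) : ℕ := (l.take i).sum

/-- `N_{G,λ}`, for `λ` presented as the list `l` of its parts (in order): permutations `σ`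
such that, splitting the one-line notation of `σ` into consecutive segments of sizes
`l₀, l₁, …`, every segment has no `G`-isolated letters (each non-initial letter of a
segment is `G`-adjacent to an earlier letter of the same segment) and no segment contains
a `G`-descent of `σ`. -/
def NGL {n : ℕ} (G : SimpleGraph (Fin n)) (l : List ℕ) : Set (Equiv.Perm (Fin n)) :=
  {σ | (∀ i < l.length, ∀ (j : ℕ) (hj : j < n), segStart l i < j → j < segStart l (i + 1) →
          ∃ (m : ℕ) (hm : m < n), segStart l i ≤ m ∧ m < j ∧
            G.Adj (σ ⟨m, hm⟩) (σ ⟨j, hj⟩)) ∧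
        ∀ j : ℕ, (∀ i ≤ l.length, segStart l i ≠ j + 1) → ¬ GDesc G σ j}

/-! ### Auxiliary material for the bijection -/

section Aux

variable {n : ℕ}

/-- The orientation induced by a permutation: each edge of `G` is oriented from the
later letter to the earlier letter in the one-line notation of `σ`. -/
def Phi (G : SimpleGraph (Fin n)) (σ : Equiv.Perm (Fin n)) : Fin n → Fin n → Prop :=
  fun u v => G.Adj u v ∧ σ.symm v < σ.symm u

/-- Lengths of reversed directed paths ending at `x` (encoded as lists `v₁,…,v_k`
with `o v_{j+1} v_j`, i.e. directed paths starting at `x` read backwards). -/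
def PathSet (o : Fin n → Fin n → Prop) (x : Fin n) : Set ℕ :=
  {k | ∃ l : List (Fin n), l.length = k ∧ l.Chain' (fun a b => o b a) ∧ l.getLast? = some x}

/-- The length of the longest directed path of `o` starting at `x`. -/
noncomputable def gr (o : Fin n → Fin n → Prop) (x : Fin n) : ℕ := sSup (PathSet o x)

lemma one_mem_PathSet (o : Fin n → Fin n → Prop) (x : Fin n) : 1 ∈ PathSet o x :=
  ⟨[x], rfl, List.isChain_singleton x, rfl⟩

lemma chain'_and {α : Type*} {R S : α → α → Prop} {l : List α} (hR : l.Chain' R)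
    (hS : l.Chain' S) : l.Chain' (fun a b => R a b ∧ S a b) := by
  simp only [List.Chain'] at hR hS ⊢
  rw [List.isChain_iff_getElem] at hR hS ⊢
  exact fun i h => ⟨hR i h, hS i h⟩

lemma pathSet_le {o : Fin n → Fin n → Prop} (hac : ∀ v, ¬ Relation.TransGen o v v)
    (x : Fin n) : ∀ k ∈ PathSet o x, k ≤ n := by
  rintro k ⟨l, rfl, hc, -⟩
  have h1 : l.Chain' (Relation.TransGen (fun a b => o b a)) :=
    hc.imp fun a b h => Relation.TransGen.single h
  have h2 : l.Pairwise (Relation.TransGen (fun a b => o b a)) :=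
    List.isChain_iff_pairwise.mp h1
  have h3 : l.Nodup := by
    refine h2.imp ?_
    rintro a b h rfl
    exact hac a (Relation.transGen_swap.mp h)
  simpa using h3.length_le_card

lemma pathSet_bdd {o : Fin n → Fin n → Prop} (hac : ∀ v, ¬ Relation.TransGen o v v)
    (x : Fin n) : BddAbove (PathSet o x) :=
  ⟨n, fun k hk => pathSet_le hac x k hk⟩

lemma gr_mem {o : Fin n → Fin n → Prop} (hac : ∀ v, ¬ Relation.TransGen o v v)
    (x : Fin n) : gr o x ∈ PathSet o x :=
  Nat.sSup_mem ⟨1, one_mem_PathSet o x⟩ (pathSet_bdd hac x)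

lemma le_gr {o : Fin n → Fin n → Prop} (hac : ∀ v, ¬ Relation.TransGen o v v)
    {x : Fin n} {k : ℕ} (hk : k ∈ PathSet o x) : k ≤ gr o x :=
  le_csSup (pathSet_bdd hac x) hk

lemma gr_lt_of_rel {o : Fin n → Fin n → Prop} (hac : ∀ v, ¬ Relation.TransGen o v v)
    {u v : Fin n} (h : o u v) : gr o v < gr o u := by
  obtain ⟨l, hl, hc, hlast⟩ := gr_mem hac v
  have hmem : gr o v + 1 ∈ PathSet o u := by
    refine ⟨l ++ [u], by simp [hl], ?_, List.getLast?_concat⟩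
    simp only [List.Chain']
    rw [List.isChain_append]
    refine ⟨hc, List.isChain_singleton u, ?_⟩
    intro a ha b hb
    simp only [List.head?_cons, Option.mem_def, Option.some.injEq] at hb
    rw [hlast] at ha
    simp only [Option.mem_def, Option.some.injEq] at ha
    subst ha; subst hb
    exact h
  exact lt_of_lt_of_le (Nat.lt_succ_self _) (le_gr hac hmem)

lemma gr_sink {o : Fin n → Fin n → Prop} (hac : ∀ v, ¬ Relation.TransGen o v v)
    {s : Fin n} (hs : ∀ u, ¬ o s u) : gr o s = 1 := by
  refine le_antisymm (csSup_le ⟨1, one_mem_PathSet o s⟩ ?_) (le_gr hac (one_mem_PathSet o s))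
  rintro k ⟨l, rfl, hc, hlast⟩
  by_contra hk
  push_neg at hk
  have hlen : 2 ≤ l.length := hk
  simp only [List.Chain'] at hc
  rw [List.isChain_iff_getElem] at hc
  have hi : l.length - 2 + 1 < l.length := by omega
  have := hc (l.length - 2) hi
  have hlast' : l[l.length - 2 + 1] = s := by
    have hne : l ≠ [] := by rintro rfl; simp at hlen
    rw [List.getLast?_eq_getLast_of_ne_nil hne, Option.some_inj] at hlast
    rw [← hlast, List.getLast_eq_getElem]
    congr 1
    omega
  rw [hlast'] at this
  exact hs _ this

/-- The rank of `x` with respect to `(G, σ)` only depends on the induced orientation: it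
is the length of the longest directed path of `Phi G σ` starting at `x`. -/
lemma rank_eq_gr (G : SimpleGraph (Fin n)) (σ : Equiv.Perm (Fin n)) (x : Fin n) :
    rank G σ x = gr (Phi G σ) x := by
  unfold rank gr PathSet
  congr 1
  ext k
  constructor
  · rintro ⟨l, rfl, hsort, hchain, hlast⟩
    refine ⟨l.map σ, by simp, ?_, by rw [List.getLast?_map, hlast]; simp⟩
    simp only [List.Chain']
    rw [List.isChain_map]
    have hlt : l.Chain' (· < ·) := List.isChain_iff_pairwise.mpr hsort
    have hadj : l.Chain' (fun a b => G.Adj (σ a) (σ b)) := (List.isChain_map σ).mp hchain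
    refine (chain'_and hlt hadj).imp ?_
    rintro a b ⟨h1, h2⟩
    exact ⟨h2.symm, by simpa using h1⟩
  · rintro ⟨l, rfl, hchain, hlast⟩
    refine ⟨l.map σ.symm, by simp, ?_, ?_, ?_⟩
    · refine List.isChain_iff_pairwise.mp ?_
      rw [List.isChain_map]
      refine hchain.imp ?_
      intro a b h
      exact h.2
    · rw [List.map_map]
      simp only [Equiv.self_comp_symm, List.map_id]
      refine hchain.imp ?_
      intro a b h
      exact h.1.symm
    · rw [List.getLast?_map, hlast]
      rfl

/-- The sort key: rank, with ties broken by the letter itself. -/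
noncomputable def skey (o : Fin n → Fin n → Prop) (x : Fin n) : ℕ ×ₗ Fin n :=
  toLex (gr o x, x)

lemma skey_injective (o : Fin n → Fin n → Prop) : Function.Injective (skey o) := by
  intro a b h
  have := congrArg (fun p => (ofLex p).2) h
  simpa [skey] using this

lemma skey_lt_of_rel {o : Fin n → Fin n → Prop} (hac : ∀ v, ¬ Relation.TransGen o v v)
    {u v : Fin n} (h : o u v) : skey o v < skey o u := by
  rw [skey, skey, Prod.Lex.lt_iff]
  exact Or.inl (gr_lt_of_rel hac h)

lemma phi_acyclic (G : SimpleGraph (Fin n)) (σ : Equiv.Perm (Fin n)) :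
    ∀ v, ¬ Relation.TransGen (Phi G σ) v v := by
  intro v h
  have h2 : Relation.TransGen (fun u v : Fin n => σ.symm v < σ.symm u) v v :=
    Relation.TransGen.mono (r := Phi G σ) (fun a b hab => hab.2) v v h
  have htr : Transitive (fun u v : Fin n => σ.symm v < σ.symm u) :=
    fun a b c h1 h2 => lt_trans h2 h1
  haveI : IsTrans (Fin n) (fun u v : Fin n => σ.symm v < σ.symm u) := ⟨htr⟩
  rw [Relation.transGen_eq_self] at h2
  exact lt_irrefl _ h2

lemma strictMono_fin {α : Type*} [Preorder α] {f : Fin n → α}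
    (h : ∀ (i : ℕ) (hi : i + 1 < n), f ⟨i, Nat.lt_of_succ_lt hi⟩ < f ⟨i + 1, hi⟩) :
    StrictMono f := by
  have key : ∀ (d a : ℕ) (ha : a + d < n), 0 < d → f ⟨a, by omega⟩ < f ⟨a + d, ha⟩ := by
    intro d
    induction d with
    | zero => intro a ha h0; omega
    | succ d ih =>
      intro a ha _
      rcases Nat.eq_zero_or_pos d with hd | hd
      · subst hd
        exact h a (by omega)
      · calc f ⟨a, by omega⟩ < f ⟨a + d, by omega⟩ := ih a (by omega) hd
          _ < f ⟨a + d + 1, by omega⟩ := h (a + d) (by omega)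
  rintro ⟨a, ha⟩ ⟨b, hb⟩ hab
  have hab' : a < b := hab
  have h2 := key (b - a) a (by omega) (by omega)
  simpa only [show a + (b - a) = b from by omega] using h2

/-- The canonical permutation associated to an orientation: letters sorted by `skey`. -/
noncomputable def canonFun (o : Fin n → Fin n → Prop) (j : Fin n) : Fin n :=
  (ofLex ((Finset.univ.image (skey o)).orderEmbOfFin
    (by rw [Finset.card_image_of_injective _ (skey_injective o), Finset.card_univ,
      Fintype.card_fin]) j)).2

lemma skey_canonFun (o : Fin n → Fin n → Prop) (j : Fin n) :
    skey o (canonFun o j) = (Finset.univ.image (skey o)).orderEmbOfFin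
      (by rw [Finset.card_image_of_injective _ (skey_injective o), Finset.card_univ,
        Fintype.card_fin]) j := by
  have hmem := (Finset.univ.image (skey o)).orderEmbOfFin_mem
    (by rw [Finset.card_image_of_injective _ (skey_injective o), Finset.card_univ,
      Fintype.card_fin]) j
  rw [Finset.mem_image] at hmem
  obtain ⟨x, -, hx⟩ := hmem
  rw [canonFun, ← hx]
  simp [skey]

lemma canonFun_injective (o : Fin n → Fin n → Prop) : Function.Injective (canonFun o) := by
  intro a b h
  have : skey o (canonFun o a) = skey o (canonFun o b) := by rw [h]
  rw [skey_canonFun, skey_canonFun] at this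
  exact (Finset.orderEmbOfFin _ _).injective this

/-- The canonical permutation, as an `Equiv.Perm`. -/
noncomputable def canon (o : Fin n → Fin n → Prop) : Equiv.Perm (Fin n) :=
  Equiv.ofBijective (canonFun o) (Finite.injective_iff_bijective.mp (canonFun_injective o))

lemma canon_apply (o : Fin n → Fin n → Prop) (j : Fin n) : canon o j = canonFun o j := rfl

lemma skey_canon_strictMono (o : Fin n → Fin n → Prop) :
    StrictMono (fun j => skey o (canon o j)) := by
  have : (fun j => skey o (canon o j)) = fun j => (Finset.univ.image (skey o)).orderEmbOfFin
      (by rw [Finset.card_image_of_injective _ (skey_injective o), Finset.card_univ,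
        Fintype.card_fin]) j := by
    funext j
    rw [canon_apply, skey_canonFun]
  rw [this]
  exact (Finset.orderEmbOfFin _ _).strictMono

/-- Any permutation sorting the letters by `skey o` is the canonical one. -/
lemma eq_canon_of_strictMono {o : Fin n → Fin n → Prop} {σ : Equiv.Perm (Fin n)}
    (h : StrictMono (fun j => skey o (σ j))) : σ = canon o := by
  have hcard : (Finset.univ.image (skey o)).card = n := by
    rw [Finset.card_image_of_injective _ (skey_injective o), Finset.card_univ,
      Fintype.card_fin]
  have h1 : (fun j => skey o (σ j)) =
      (Finset.univ.image (skey o)).orderEmbOfFin hcard :=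
    Finset.orderEmbOfFin_unique hcard
      (fun j => Finset.mem_image.mpr ⟨σ j, Finset.mem_univ _, rfl⟩) h
  have h2 : (fun j => skey o (canon o j)) =
      (Finset.univ.image (skey o)).orderEmbOfFin hcard := by
    funext j
    rw [canon_apply, skey_canonFun]
  ext j
  have h3 : skey o (σ j) = skey o (canon o j) := by
    rw [congrFun h1 j, ← congrFun h2 j]
  exact congrArg Fin.val (skey_injective o h3)

/-- Membership in `NGL G [n]`, simplified. -/
lemma mem_NGL_single_iff (G : SimpleGraph (Fin n)) (σ : Equiv.Perm (Fin n)) :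
    σ ∈ NGL G [n] ↔
      (∀ (j : ℕ) (hj : j < n), 0 < j → ∃ (m : ℕ) (hm : m < n), m < j ∧
          G.Adj (σ ⟨m, hm⟩) (σ ⟨j, hj⟩)) ∧ ∀ j : ℕ, ¬ GDesc G σ j := by
  have hseg0 : segStart [n] 0 = 0 := rfl
  have hseg1 : segStart [n] 1 = n := by simp [segStart]
  constructor
  · rintro ⟨h1, h2⟩
    constructor
    · intro j hj h0
      obtain ⟨m, hm, -, hmj, hadj⟩ := h1 0 (by simp) j hj (by omega) (by rw [hseg1]; omega)
      exact ⟨m, hm, hmj, hadj⟩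
    · intro j hd
      obtain ⟨hjn, -⟩ := id hd
      refine h2 j ?_ hd
      intro i hi
      simp only [List.length_singleton] at hi
      interval_cases i
      · omega
      · rw [hseg1]; omega
  · rintro ⟨h1, h2⟩
    constructor
    · intro i hi j hj hij hij'
      simp only [List.length_singleton] at hi
      have : i = 0 := by omega
      subst this
      rw [hseg0] at hij
      obtain ⟨m, hm, hmj, hadj⟩ := h1 j hj hij
      exact ⟨m, hm, Nat.zero_le m, hmj, hadj⟩
    · intro j _
      exact h2 j


lemma strictMono_skey_of_mem {G : SimpleGraph (Fin n)} {σ : Equiv.Perm (Fin n)}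
    (hσ : σ ∈ NGL G [n]) : StrictMono (fun j => skey (Phi G σ) (σ j)) := by
  apply strictMono_fin
  intro i hi
  have hnd : ¬ GDesc G σ i := ((mem_NGL_single_iff G σ).mp hσ).2 i
  rw [GDesc] at hnd
  push_neg at hnd
  have hnd' := hnd hi
  obtain ⟨hle, heq⟩ := hnd'
  set a := σ ⟨i, Nat.lt_of_succ_lt hi⟩ with ha
  set b := σ ⟨i + 1, hi⟩ with hb
  have hab : a ≠ b := by
    intro h
    have := σ.injective h
    rw [Fin.mk.injEq] at this
    omega
  rw [rank_eq_gr, rank_eq_gr] at hle heq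
  simp only [skey]
  rw [Prod.Lex.lt_iff]
  rcases lt_or_eq_of_le hle with h | h
  · exact Or.inl h
  · exact Or.inr ⟨h, lt_of_le_of_ne (heq h) hab⟩

lemma phi_prop (hn : 0 < n) (G : SimpleGraph (Fin n)) {σ : Equiv.Perm (Fin n)}
    (hσ : σ ∈ NGL G [n]) :
    (∀ u v, G.Adj u v ↔ (Phi G σ u v ∨ Phi G σ v u)) ∧
    (∀ u v, Phi G σ u v → ¬ Phi G σ v u) ∧
    (∀ v, ¬ Relation.TransGen (Phi G σ) v v) ∧
    (∃! v : Fin n, ∀ u, ¬ Phi G σ v u) := by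
  refine ⟨?_, ?_, phi_acyclic G σ, ?_⟩
  · intro u v
    constructor
    · intro hA
      have hne : σ.symm u ≠ σ.symm v := fun h => hA.ne (by
        have := congrArg σ h; simpa using this)
      rcases hne.lt_or_gt with h | h
      · exact Or.inr ⟨hA.symm, h⟩
      · exact Or.inl ⟨hA, h⟩
    · rintro (⟨h, -⟩ | ⟨h, -⟩)
      · exact h
      · exact h.symm
  · rintro u v ⟨-, h⟩ ⟨-, h'⟩
    exact lt_asymm h h'
  · refine ⟨σ ⟨0, hn⟩, ?_, ?_⟩
    · rintro u ⟨-, hlt⟩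
      rw [Equiv.symm_apply_apply] at hlt
      simp [Fin.lt_def] at hlt
    · intro v hv
      by_contra hne
      have h0 : 0 < (σ.symm v : ℕ) := by
        rcases Nat.eq_zero_or_pos (σ.symm v : ℕ) with h | h
        · exfalso
          apply hne
          have : σ.symm v = ⟨0, hn⟩ := Fin.ext h
          rw [← this, Equiv.apply_symm_apply]
        · exact h
      obtain ⟨m, hm, hmj, hadj⟩ :=
        ((mem_NGL_single_iff G σ).mp hσ).1 (σ.symm v : ℕ) (σ.symm v).isLt h0
      rw [Fin.eta, Equiv.apply_symm_apply] at hadj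
      refine hv (σ ⟨m, hm⟩) ⟨hadj.symm, ?_⟩
      rw [Equiv.symm_apply_apply, Fin.lt_def]
      exact hmj

lemma canon_spec (G : SimpleGraph (Fin n)) {o : Fin n → Fin n → Prop}
    (h1 : ∀ u v, G.Adj u v ↔ (o u v ∨ o v u)) (h2 : ∀ u v, o u v → ¬ o v u)
    (h3 : ∀ v, ¬ Relation.TransGen o v v) (h4 : ∃! v : Fin n, ∀ u, ¬ o v u) :
    Phi G (canon o) = o ∧ canon o ∈ NGL G [n] := by
  set σ := canon o with hσdef
  have mono : StrictMono (fun j => skey o (σ j)) := skey_canon_strictMono o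
  have hlt : ∀ a b : Fin n, σ.symm a < σ.symm b ↔ skey o a < skey o b := by
    intro a b
    have := mono.lt_iff_lt (a := σ.symm a) (b := σ.symm b)
    simpa using this.symm
  have hPhi : Phi G σ = o := by
    funext u v
    apply propext
    constructor
    · rintro ⟨hA, hlt'⟩
      rcases (h1 u v).mp hA with h | h
      · exact h
      · exfalso
        have := (hlt v u).mp hlt'
        have h' := skey_lt_of_rel h3 h
        exact lt_asymm this h'
    · intro h
      exact ⟨(h1 u v).mpr (Or.inl h), (hlt v u).mpr (skey_lt_of_rel h3 h)⟩
  refine ⟨hPhi, (mem_NGL_single_iff G σ).mpr ⟨?_, ?_⟩⟩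
  · intro j hj h0
    obtain ⟨s, hs, huniq⟩ := h4
    have hn0 : 0 < n := lt_trans h0 hj
    have hvs : σ ⟨j, hj⟩ ≠ s := by
      intro hes
      have hw : σ ⟨0, hn0⟩ ≠ s := by
        intro he
        have := σ.injective (he.trans hes.symm)
        rw [Fin.mk.injEq] at this
        omega
      have hwo : ∃ u, o (σ ⟨0, hn0⟩) u := by
        by_contra hno
        push_neg at hno
        exact hw (huniq _ hno)
      obtain ⟨u, hu⟩ := hwo
      have hgu : gr o u < gr o (σ ⟨0, hn0⟩) := gr_lt_of_rel h3 hu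
      have hgs : gr o s = 1 := gr_sink h3 hs
      have hge : 1 ≤ gr o u := le_gr h3 (one_mem_PathSet o u)
      have hks : skey o (σ ⟨j, hj⟩) < skey o (σ ⟨0, hn0⟩) := by
        rw [hes, skey, skey, Prod.Lex.lt_iff]
        exact Or.inl (by simp only [ofLex_toLex]; omega)
      have := mono (show (⟨0, hn0⟩ : Fin n) < ⟨j, hj⟩ from by
        rw [Fin.mk_lt_mk]; exact h0)
      exact lt_asymm this hks
    have hex : ∃ u, o (σ ⟨j, hj⟩) u := by
      by_contra hno
      push_neg at hno
      exact hvs (huniq _ hno)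
    obtain ⟨u, hu⟩ := hex
    have hku : skey o u < skey o (σ ⟨j, hj⟩) := skey_lt_of_rel h3 hu
    have hlt2 : σ.symm u < σ.symm (σ ⟨j, hj⟩) := (hlt u _).mpr hku
    rw [Equiv.symm_apply_apply] at hlt2
    refine ⟨(σ.symm u : ℕ), (σ.symm u).isLt, hlt2, ?_⟩
    rw [Fin.eta, Equiv.apply_symm_apply]
    have : G.Adj (σ ⟨j, hj⟩) u := (h1 _ u).mpr (Or.inl hu)
    exact this.symm
  · intro j hd
    obtain ⟨hjn, hcases⟩ := hd
    have hr : ∀ x, rank G σ x = gr o x := fun x => by rw [rank_eq_gr, hPhi]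
    have hmono := mono (show (⟨j, Nat.lt_of_succ_lt hjn⟩ : Fin n) < ⟨j + 1, hjn⟩ from by
      rw [Fin.mk_lt_mk]; omega)
    rw [hr, hr] at hcases
    simp only [skey] at hmono
    rw [Prod.Lex.lt_iff] at hmono
    simp only [ofLex_toLex] at hmono
    rcases hcases with hc | ⟨hc1, hc2⟩
    · rcases hmono with hm | ⟨hm1, -⟩
      · omega
      · omega
    · rcases hmono with hm | ⟨-, hm2⟩
      · omega
      · exact lt_asymm hm2 hc2

end Aux

/-- the permutations in `N_{G,(n)}` are in bijection with the acyclic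
orientations of `G` having a unique sink.  An orientation of `G` is a relation `o` with
`G.Adj u v ↔ o u v ∨ o v u` and at most one direction per edge; it is acyclic when it has
no directed cycle, and `v` is a sink when it has no outgoing edge. -/
theorem NGL_single_part_bijection (n : ℕ) (hn : 0 < n) (G : SimpleGraph (Fin n)) :
    Nonempty ((NGL G [n] : Set (Equiv.Perm (Fin n))) ≃
      {o : Fin n → Fin n → Prop //
        (∀ u v, G.Adj u v ↔ (o u v ∨ o v u)) ∧
        (∀ u v, o u v → ¬ o v u) ∧
        (∀ v, ¬ Relation.TransGen o v v) ∧
        (∃! v : Fin n, ∀ u, ¬ o v u)}) := by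
  refine ⟨Equiv.ofBijective
    (fun σ => ⟨Phi G σ.1, phi_prop hn G σ.2⟩) ⟨?_, ?_⟩⟩
  · rintro ⟨σ, hσ⟩ ⟨τ, hτ⟩ h
    have hPhi : Phi G σ = Phi G τ := congrArg Subtype.val h
    have hσ' := eq_canon_of_strictMono (strictMono_skey_of_mem hσ)
    have hτ' := eq_canon_of_strictMono (strictMono_skey_of_mem hτ)
    refine Subtype.ext ?_
    calc σ = canon (Phi G σ) := hσ'
      _ = canon (Phi G τ) := by rw [hPhi]
      _ = τ := hτ'.symm
  · rintro ⟨o, h1, h2, h3, h4⟩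
    obtain ⟨hPhi, hmem⟩ := canon_spec G h1 h2 h3 h4
    exact ⟨⟨canon o, hmem⟩, Subtype.ext hPhi⟩

end CQSF
end
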